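/- arXiv:1810.13406 — 2 statements merged into one kernel-verified Lean document; each statement's English description precedes it below -/
import Mathlib

section
/- Consider the two-term complex C : R → R over R = ℚ[U₁,U₂]/(U₁U₂) whose differential is multiplication by 2U₁ + 2U₂. Then H₁(C) = 0 and H₀(C) ≅ ℚ[X]/(X²) as ℚ-vector spaces (so the total homology of the complex C₁±₁(𝒰₂) for the unknot is isomorphic to A). -/
/-!
`H₁ = 0`: if `U₁U₂ ∣ (2U₁ + 2U₂) p` in `ℚ[U₁,U₂]`, then `U₁U₂ ∣ p`, because neither of the primes
`U₁`, `U₂` divides `2U₁ + 2U₂` (it does not vanish at `(0,1)` or `(1,0)`).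

`H₀ ≅ ℚ[ε]`: modulo `2U₁ + 2U₂` we get `U₂ = -U₁` since `2` is invertible, so `U₁U₂ = 0` becomes
`U₁² = 0`; the maps `Uᵢ ↦ ±ε` and `ε ↦ U₁` are then mutually inverse.
-/

open MvPolynomial

/-- The ring `R = ℚ[U₁,U₂]/(U₁U₂)`, the cycle module of the unknot diagram `𝒰₂`. -/
noncomputable abbrev Runk : Type :=
  MvPolynomial (Fin 2) ℚ ⧸ Ideal.span {(X 0 * X 1 : MvPolynomial (Fin 2) ℚ)}

noncomputable abbrev u₁ : Runk := Ideal.Quotient.mk _ (X 0)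
noncomputable abbrev u₂ : Runk := Ideal.Quotient.mk _ (X 1)

lemma MvPolynomial.not_X_dvd_of_eval_ne_zero {R σ : Type*} [CommSemiring R] {i : σ}
    {p : MvPolynomial σ R} (v : σ → R) (hv : v i = 0) (hp : eval v p ≠ 0) : ¬ X i ∣ p := by
  rintro ⟨q, rfl⟩
  simp [hv] at hp

lemma isRelPrime_X_zero_mul_X_one :
    IsRelPrime (X 0 * X 1) (2 * X 0 + 2 * X 1 : MvPolynomial (Fin 2) ℚ) :=
  .mul_left
    (X_prime.irreducible.isRelPrime_iff_not_dvd.2 (not_X_dvd_of_eval_ne_zero ![0, 1] rfl (by simp)))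
    (X_prime.irreducible.isRelPrime_iff_not_dvd.2 (not_X_dvd_of_eval_ne_zero ![1, 0] rfl (by simp)))

lemma eq_zero_of_two_mul_u₁_add_two_mul_u₂_mul_eq_zero (f : Runk)
    (hf : (2 * u₁ + 2 * u₂) * f = 0) : f = 0 := by
  obtain ⟨p, rfl⟩ := Ideal.Quotient.mk_surjective f
  rw [← map_ofNat (Ideal.Quotient.mk _), ← map_mul, ← map_mul, ← map_add, ← map_mul,
    Ideal.Quotient.eq_zero_iff_mem, Ideal.mem_span_singleton] at hf
  rw [Ideal.Quotient.eq_zero_iff_mem, Ideal.mem_span_singleton]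
  exact isRelPrime_X_zero_mul_X_one.dvd_of_dvd_mul_left hf

section TwoInvertible

variable {A : Type*} [CommRing A] {a b : A}

lemma eq_neg_of_two_mul_add_two_mul_eq_zero (h2 : IsUnit (2 : A)) (h : 2 * a + 2 * b = 0) :
    b = -a := by
  rw [← mul_add, h2.mul_right_eq_zero] at h
  exact eq_neg_of_add_eq_zero_right h

lemma mul_self_eq_zero_of_two_mul_add_two_mul_eq_zero (h2 : IsUnit (2 : A)) (hab : a * b = 0)
    (h : 2 * a + 2 * b = 0) : a * a = 0 := by
  rwa [eq_neg_of_two_mul_add_two_mul_eq_zero h2 h, mul_neg, neg_eq_zero] at hab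

end TwoInvertible

lemma isUnit_two_of_algebra_rat (A : Type*) [CommRing A] [Algebra ℚ A] : IsUnit (2 : A) := by
  simpa only [map_ofNat] using (IsUnit.mk0 (2 : ℚ) two_ne_zero).map (algebraMap ℚ A)

open DualNumber

-- Instance search does not find `HasDistribNeg` etc. on this nested quotient, so ring
-- computations in it go through the general lemmas above, with `A` given explicitly.
local notation "H₀" => Runk ⧸ Ideal.span {(2 * u₁ + 2 * u₂ : Runk)}

lemma u₁_mul_u₂ : u₁ * u₂ = 0 :=
  Ideal.Quotient.eq_zero_iff_mem.2 (Ideal.mem_span_singleton_self _)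

lemma two_mul_mk_u₁_add_two_mul_mk_u₂ :
    2 * (Ideal.Quotient.mk _ u₁ : H₀) + 2 * Ideal.Quotient.mk _ u₂ = 0 := by
  rw [← map_ofNat (Ideal.Quotient.mk _) 2, ← map_mul, ← map_mul, ← map_add]
  exact Ideal.Quotient.eq_zero_iff_mem.2 (Ideal.mem_span_singleton_self _)

lemma mk_u₂_eq_neg_mk_u₁ : (Ideal.Quotient.mk _ u₂ : H₀) = -Ideal.Quotient.mk _ u₁ :=
  eq_neg_of_two_mul_add_two_mul_eq_zero (isUnit_two_of_algebra_rat H₀)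
    two_mul_mk_u₁_add_two_mul_mk_u₂

lemma mk_u₁_mul_self : (Ideal.Quotient.mk _ u₁ : H₀) * Ideal.Quotient.mk _ u₁ = 0 :=
  mul_self_eq_zero_of_two_mul_add_two_mul_eq_zero (isUnit_two_of_algebra_rat H₀)
    (by rw [← map_mul, u₁_mul_u₂, map_zero]) two_mul_mk_u₁_add_two_mul_mk_u₂

noncomputable def runkToDualNumber : Runk →ₐ[ℚ] ℚ[ε] :=
  Ideal.Quotient.liftₐ _ (aeval ![ε, -ε]) fun _ h => by
    obtain ⟨c, rfl⟩ := Ideal.mem_span_singleton'.1 h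
    simp

@[simp] lemma runkToDualNumber_u₁ : runkToDualNumber u₁ = ε := aeval_X _ 0

@[simp] lemma runkToDualNumber_u₂ : runkToDualNumber u₂ = -ε := aeval_X _ 1

noncomputable def toDualNumber : H₀ →ₐ[ℚ] ℚ[ε] :=
  Ideal.Quotient.liftₐ _ runkToDualNumber fun _ h => by
    obtain ⟨c, rfl⟩ := Ideal.mem_span_singleton'.1 h
    simp

@[simp] lemma toDualNumber_mk (x : Runk) :
    toDualNumber (Ideal.Quotient.mk _ x) = runkToDualNumber x := rfl

noncomputable def ofDualNumber : ℚ[ε] →ₐ[ℚ] H₀ :=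
  lift ⟨(Algebra.ofId _ _, Ideal.Quotient.mk _ u₁), mk_u₁_mul_self,
    fun r => Algebra.commute_algebraMap_right r _⟩

@[simp] lemma ofDualNumber_eps : ofDualNumber ε = Ideal.Quotient.mk _ u₁ := lift_apply_eps _

lemma toDualNumber_comp_ofDualNumber : toDualNumber.comp ofDualNumber = AlgHom.id ℚ ℚ[ε] :=
  algHom_ext (by simp)

lemma ofDualNumber_comp_toDualNumber : ofDualNumber.comp toDualNumber = AlgHom.id ℚ H₀ := by
  refine Ideal.Quotient.algHom_ext _ (Ideal.Quotient.algHom_ext _ (algHom_ext fun i => ?_))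
  fin_cases i
  · simp
  · simpa using mk_u₂_eq_neg_mk_u₁.symm

noncomputable def quotientEquivDualNumber : H₀ ≃ₐ[ℚ] ℚ[ε] :=
  .ofAlgHom toDualNumber ofDualNumber toDualNumber_comp_ofDualNumber ofDualNumber_comp_toDualNumber

/-- For the two-term complex `C : R → R` over `R = ℚ[U₁,U₂]/(U₁U₂)` with
differential multiplication by `2U₁ + 2U₂`, we have `H₁(C) = 0` (the differential is
injective) and `H₀(C) = R/(2U₁+2U₂) ≅ ℚ[X]/(X²)` as ℚ-vector spaces. -/
theorem stmt6 :
    (∀ f : Runk, (2 * u₁ + 2 * u₂) * f = 0 → f = 0) ∧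
    Nonempty ((Runk ⧸ Ideal.span {(2 * u₁ + 2 * u₂ : Runk)}) ≃ₗ[ℚ] DualNumber ℚ) :=
  ⟨eq_zero_of_two_mul_u₁_add_two_mul_u₂_mul_eq_zero, ⟨quotientEquivDualNumber.toLinearEquiv⟩⟩
end

section
/- Let A = ℚ[X]/(X²), graded with 1 in degree 1 and X in degree −1, and give A ⊗ A the tensor grading. Regard A ⊗ A and A as modules over ℚ[X₁,X₂] where on A ⊗ A the variables act as X⊗1 and 1⊗X respectively, and on A both X₁ and X₂ act as multiplication by X. Then every ℚ[X₁,X₂]-module homomorphism f : A ⊗ A → A that is homogeneous of degree −1 is a scalar multiple of the multiplication map m. -/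
open TensorProduct

local notation "A" => DualNumber ℚ
local notation "εq" => (DualNumber.eps : DualNumber ℚ)

/-!
Multiplication by `ε ⊗ 1` and `1 ⊗ ε` generates the action of `A ⊗ A` on itself, so the two
linearity conditions make `f` linear over `A ⊗ A`, where `A ⊗ A` acts on `A` through `m`.
Hence `f x = m x * f (1 ⊗ 1)`, and the degree condition forces `f (1 ⊗ 1)` to be a multiple of `1`.
-/

open DualNumber in
theorem DualNumber.adjoin_eps_eq_top (R : Type*) [CommSemiring R] :
    Algebra.adjoin R {(ε : R[ε])} = ⊤ := by
  refine Algebra.eq_top_iff.mpr fun x => ?_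
  have hx : x = algebraMap R R[ε] x.fst + x.snd • ε := by
    ext <;> simp [TrivSqZeroExt.algebraMap_eq_inl]
  rw [hx]
  exact add_mem (Subalgebra.algebraMap_mem _ _)
    (Subalgebra.smul_mem _ (Algebra.subset_adjoin (Set.mem_singleton _)) _)

theorem LinearMap.map_mul_eq_smul_of_adjoin_eq_top {R S B M : Type*} [CommSemiring R]
    [Semiring S] [Algebra R S] [Semiring B] [Algebra R B] [AddCommMonoid M] [Module R M]
    [Module S M] [IsScalarTower R S M] (g : B →ₗ[R] M) (φ : S →ₐ[R] B)
    {s : Set S} (hs : Algebra.adjoin R s = ⊤) (h : ∀ a ∈ s, ∀ x, g (φ a * x) = a • g x)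
    (a : S) (x : B) : g (φ a * x) = a • g x := by
  have ha : a ∈ Algebra.adjoin R s := hs ▸ Algebra.mem_top
  induction ha using Algebra.adjoin_induction generalizing x with
  | mem a ha => exact h a ha x
  | algebraMap r => rw [AlgHom.commutes, ← Algebra.smul_def, map_smul, algebraMap_smul]
  | add a b _ _ ha hb => rw [map_add, add_mul, map_add, ha, hb, add_smul]
  | mul a b _ _ ha hb => rw [map_mul φ, mul_assoc, ha, hb, mul_smul]

theorem LinearMap.eq_mul'_smul_map_one_of_adjoin_eq_top {R S M : Type*} [CommSemiring R]
    [CommSemiring S] [Algebra R S] [AddCommMonoid M] [Module R M] [Module S M]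
    [IsScalarTower R S M] (f : S ⊗[R] S →ₗ[R] M) {s : Set S} (hs : Algebra.adjoin R s = ⊤)
    (hl : ∀ a ∈ s, ∀ x, f ((a ⊗ₜ 1) * x) = a • f x)
    (hr : ∀ b ∈ s, ∀ x, f ((1 ⊗ₜ b) * x) = b • f x) (y : S ⊗[R] S) :
    f y = LinearMap.mul' R S y • f 1 := by
  induction y using TensorProduct.induction_on with
  | zero => rw [map_zero, map_zero, zero_smul]
  | add y z hy hz => rw [map_add, map_add, hy, hz, add_smul]
  | tmul a b =>
    have hab : a ⊗ₜ[R] b = (Algebra.TensorProduct.includeLeft : S →ₐ[R] S ⊗[R] S) a *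
        (Algebra.TensorProduct.includeRight b * 1) := by simp
    rw [hab, f.map_mul_eq_smul_of_adjoin_eq_top _ hs hl,
      f.map_mul_eq_smul_of_adjoin_eq_top _ hs hr, ← mul_smul, ← hab, LinearMap.mul'_apply]

theorem stmt15_general (f : (A ⊗[ℚ] A) →ₗ[ℚ] A)
    -- `f` is `ℚ[X₁,X₂]`-linear:
    (hf₁ : ∀ x : A ⊗[ℚ] A, f ((εq ⊗ₜ 1) * x) = εq * f x)
    (hf₂ : ∀ x : A ⊗[ℚ] A, f ((1 ⊗ₜ εq) * x) = εq * f x)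
    -- `f` is homogeneous of degree `−1`:
    (hdeg₂ : ∃ c : ℚ, f (1 ⊗ₜ 1) = c • (1 : A)) :        -- degree 2 ↦ degree 1
    ∃ r : ℚ, ∀ x : A ⊗[ℚ] A, f x = r • LinearMap.mul' ℚ A x := by
  obtain ⟨c, hc⟩ := hdeg₂
  refine ⟨c, fun x => ?_⟩
  rw [f.eq_mul'_smul_map_one_of_adjoin_eq_top (DualNumber.adjoin_eps_eq_top ℚ)
      (by rintro _ rfl; exact hf₁) (by rintro _ rfl; exact hf₂),
    Algebra.TensorProduct.one_def, hc, smul_eq_mul, mul_smul_comm, mul_one]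

/-- Grade `A = ℚ[X]/(X²)` with `1` in degree `1` and `X` in degree `−1`,
and give `A ⊗ A` the tensor grading (so `1⊗1` has degree `2`, `X⊗1` and `1⊗X` degree `0`,
`X⊗X` degree `−2`).  Regard `A ⊗ A` and `A` as `ℚ[X₁,X₂]`-modules, `X₁, X₂` acting as
`X⊗1, 1⊗X` on `A ⊗ A` and both as `X` on `A`.  Then every `ℚ[X₁,X₂]`-module
homomorphism `f : A ⊗ A → A` which is homogeneous of degree `−1` (i.e. it takes each
graded piece of `A ⊗ A` of degree `d` into the piece of `A` of degree `d − 1`) is a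
scalar multiple of the multiplication map `m`. -/
theorem stmt15 (f : (A ⊗[ℚ] A) →ₗ[ℚ] A)
    -- `f` is `ℚ[X₁,X₂]`-linear:
    (hf₁ : ∀ x : A ⊗[ℚ] A, f ((εq ⊗ₜ 1) * x) = εq * f x)
    (hf₂ : ∀ x : A ⊗[ℚ] A, f ((1 ⊗ₜ εq) * x) = εq * f x)
    -- `f` is homogeneous of degree `−1`:
    (hdeg₂ : ∃ c : ℚ, f (1 ⊗ₜ 1) = c • (1 : A))          -- degree 2 ↦ degree 1
    (hdeg₀ : (∃ c : ℚ, f (εq ⊗ₜ 1) = c • εq) ∧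
             (∃ c : ℚ, f (1 ⊗ₜ εq) = c • εq))            -- degree 0 ↦ degree −1
    (hdegm₂ : f (εq ⊗ₜ εq) = 0) :                        -- degree −2 ↦ degree −3 = 0
    ∃ r : ℚ, ∀ x : A ⊗[ℚ] A, f x = r • LinearMap.mul' ℚ A x :=
  stmt15_general f hf₁ hf₂ hdeg₂
end
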